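/- arXiv:2004.02798 — 2 statements merged into one kernel-verified Lean document; each statement's English description precedes it below -/
import Mathlib

section
/- Let g : ℝ → ℝ be a monotonically increasing function satisfying g(φ + 1) = g(φ) + 1 for all φ ∈ ℝ, and suppose g(g(g(φ))) = φ + 5 for all φ ∈ ℝ. Then for every φ ∈ ℝ one has φ < g(φ) < φ + 2. -/
theorem stmt_1 (g : ℝ → ℝ) (hmono : Monotone g)
    (hper : ∀ φ : ℝ, g (φ + 1) = g φ + 1)
    (hcube : ∀ φ : ℝ, g (g (g φ)) = φ + 5) :
    ∀ φ : ℝ, φ < g φ ∧ g φ < φ + 2 := by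
  intro φ
  constructor
  · by_contra h
    push_neg at h
    have h2 : g (g φ) ≤ g φ := hmono h
    have h3 : g (g (g φ)) ≤ g (g φ) := hmono h2
    have := hcube φ
    linarith
  · by_contra h
    push_neg at h
    have hp2 : ∀ x : ℝ, g (x + 2) = g x + 2 := by
      intro x
      have := hper (x + 1)
      have := hper x
      have : x + 2 = x + 1 + 1 := by ring
      rw [this, hper (x+1), hper x]; ring
    have h2 : g (g φ) ≥ g (φ + 2) := hmono h
    rw [hp2] at h2
    have h3 : g (g (g φ)) ≥ g (g φ + 2) := hmono (by linarith)
    rw [hp2] at h3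
    have := hcube φ
    linarith
end

section
/- Let d ≥ 1 be an integer. Apart from the trivial solutions (a,b,c) ∈ {(0,0,0), (1,1,d−8)}, there exist no integers a, b, c with b = 0 or b = 1 and real α > 0 satisfying simultaneously: (i) (1/b)·(c/(4d) − α²a) = (d−8−4dα²)/(4d) = (1/(1−b))·((d−8−c)/(4d) − α²(1−a)), where when b = 0 the first of these equalities is to be read as c/(4d) − α²a = 0, and when b = 1 the last is to be read as (d−8−c)/(4d) − α²(1−a) = 0; (ii) (b/2)² − ac/(4d) ≥ 0 and ((1−b)/2)² + (1−a)(c+8−d)/(4d) ≥ 0; (iii) (b/2)² − ac/(4d) ≤ 2/d and ((1−b)/2)² + (1−a)(c+8−d)/(4d) ≤ 2/d. -/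
set_option maxHeartbeats 1000000


theorem stmt_9 (d : ℕ) (hd : 1 ≤ d) :
    ¬ ∃ (a b c : ℤ) (α : ℝ), 0 < α ∧ (b = 0 ∨ b = 1) ∧
      (b = 0 →
        ((c : ℝ) / (4 * d) - α ^ 2 * a = 0 ∧
         ((d : ℝ) - 8 - 4 * d * α ^ 2) / (4 * d) =
           ((d : ℝ) - 8 - c) / (4 * d) - α ^ 2 * (1 - a))) ∧
      (b = 1 →
        ((c : ℝ) / (4 * d) - α ^ 2 * a = ((d : ℝ) - 8 - 4 * d * α ^ 2) / (4 * d) ∧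
         ((d : ℝ) - 8 - c) / (4 * d) - α ^ 2 * (1 - a) = 0)) ∧
      (((b : ℝ) / 2) ^ 2 - (a : ℝ) * c / (4 * d) ≥ 0) ∧
      (((1 - (b : ℝ)) / 2) ^ 2 + (1 - (a : ℝ)) * ((c : ℝ) + 8 - d) / (4 * d) ≥ 0) ∧
      (((b : ℝ) / 2) ^ 2 - (a : ℝ) * c / (4 * d) ≤ 2 / d) ∧
      (((1 - (b : ℝ)) / 2) ^ 2 + (1 - (a : ℝ)) * ((c : ℝ) + 8 - d) / (4 * d) ≤ 2 / d) ∧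
      ¬ ((a, b, c) = (0, 0, 0) ∨ (a, b, c) = (1, 1, (d : ℤ) - 8)) := by
  rintro ⟨a, b, c, α, hα, hb, h0, h1, g1, g2, _, _, hnt⟩
  have hD : (0 : ℝ) < (d : ℝ) := by exact_mod_cast hd
  have hD4 : (4 : ℝ) * d ≠ 0 := by positivity
  have hαd : (0 : ℝ) < 4 * (d : ℝ) * α ^ 2 := by positivity
  rcases hb with rfl | rfl
  · obtain ⟨e1, -⟩ := h0 rfl
    have ec : (c : ℝ) = 4 * d * α ^ 2 * a := by
      field_simp at e1; linarith
    have hq : (a : ℝ) * c / (4 * d) ≤ 0 := by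
      have h0' : ((0 : ℤ) : ℝ) = 0 := by norm_num
      rw [h0'] at g1
      nlinarith [g1]
    have hg1 : (a : ℝ) * c ≤ 0 := by
      rcases div_nonpos_iff.mp hq with h | h
      · linarith [h.1, h.2, hD]
      · exact h.1
    have hac : (a : ℝ) * c = 4 * d * α ^ 2 * (a : ℝ) ^ 2 := by rw [ec]; ring
    have hsq : 4 * (d : ℝ) * α ^ 2 * (a : ℝ) ^ 2 ≤ 0 := by linarith
    have ha2 : (a : ℝ) ^ 2 = 0 := by nlinarith [sq_nonneg (a : ℝ), hαd]
    have ha : (a : ℝ) = 0 := by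
      exact sq_eq_zero_iff.mp ha2
    have ha' : a = 0 := by exact_mod_cast ha
    have hc' : c = 0 := by
      have : (c : ℝ) = 0 := by rw [ec, ha]; ring
      exact_mod_cast this
    exact hnt (Or.inl (by simp [ha', hc']))
  · obtain ⟨-, e2⟩ := h1 rfl
    have ec : (d : ℝ) - 8 - c = 4 * d * α ^ 2 * (1 - a) := by
      field_simp at e2; linarith
    have hq : (1 - (a : ℝ)) * ((c : ℝ) + 8 - d) / (4 * d) ≥ 0 := by
      have h2 : ((1 - ((1 : ℤ) : ℝ)) / 2) ^ 2 = 0 := by norm_num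
      nlinarith [g2]
    have hg2 : (1 - (a : ℝ)) * ((c : ℝ) + 8 - d) ≥ 0 := by
      rcases div_nonneg_iff.mp hq with h | h
      · exact h.1
      · nlinarith [h.2, hD]
    have hac : (1 - (a : ℝ)) * ((c : ℝ) + 8 - d) = -(4 * d * α ^ 2 * (1 - (a : ℝ)) ^ 2) := by
      linear_combination (-(1 - (a : ℝ))) * ec
    have hsq : 4 * (d : ℝ) * α ^ 2 * (1 - (a : ℝ)) ^ 2 ≤ 0 := by linarith
    have ha2 : (1 - (a : ℝ)) ^ 2 = 0 := by nlinarith [sq_nonneg (1 - (a : ℝ)), hαd]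
    have ha : (1 : ℝ) - a = 0 := sq_eq_zero_iff.mp ha2
    have ha' : a = 1 := by
      have : (a : ℝ) = 1 := by linarith
      exact_mod_cast this
    have hc' : c = (d : ℤ) - 8 := by
      have hcr : (c : ℝ) = (d : ℝ) - 8 := by
        linear_combination (-1 : ℝ) * ec + (-(4 * (d : ℝ) * α ^ 2)) * ha
      have : (c : ℝ) = (((d : ℤ) - 8 : ℤ) : ℝ) := by push_cast; linarith
      exact_mod_cast this
    exact hnt (Or.inr (by simp [ha', hc']))
end
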